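/- Let p be a prime with p ≡ 1 (mod 5), p ∉ {11, 41, 61}. The surface S in P^3 over F_p defined by x^(2(p-1)/5) + y^(2(p-1)/5) + x^((p-1)/5) y^((p-1)/5) + z^(2(p-1)/5) + w^(2(p-1)/5) = 0 contains no line defined over F_p. In particular, the intersection of S with the plane x = 0 has no F_p-rational points. -/
import Mathlib

lemma key5 (p : ℕ) [Fact p.Prime] (hmod : p % 5 = 1) (h11 : p ≠ 11)
    (B C D : ZMod p) (hB : B = 0 ∨ B ^ 5 = 1) (hC : C = 0 ∨ C ^ 5 = 1)
    (hD : D = 0 ∨ D ^ 5 = 1) (hne : ¬ (B = 0 ∧ C = 0 ∧ D = 0)) :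
    B + C + D ≠ 0 := by
  have hp : p.Prime := Fact.out
  intro hsum
  have h33 : (33 : ZMod p) ≠ 0 := by
    intro h
    have hd : (p : ℕ) ∣ 33 := (ZMod.natCast_eq_zero_iff 33 p).mp (by exact_mod_cast h)
    have : p ∈ Nat.divisors 33 := Nat.mem_divisors.mpr ⟨hd, by norm_num⟩
    fin_cases this
    · exact hp.one_lt.ne' rfl
    · omega
    · exact h11 rfl
    · omega
  have h2 : (2 : ZMod p) ≠ 0 := by
    intro h
    have hd : (p : ℕ) ∣ 2 := (ZMod.natCast_eq_zero_iff 2 p).mp (by exact_mod_cast h)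
    have := Nat.le_of_dvd (by norm_num) hd
    have := hp.two_le
    interval_cases p <;> omega
  have h1 : (1 : ZMod p) ≠ 0 := one_ne_zero
  -- helper for the "one nonzero" cases
  rcases hB with hB | hB <;> rcases hC with hC | hC <;> rcases hD with hD | hD
  · exact hne ⟨hB, hC, hD⟩
  · -- B=0, C=0, D^5=1
    subst hB; subst hC
    have hD0 : D = 0 := by linear_combination hsum
    exact h1 (by rw [← hD, hD0]; simp)
  · subst hB; subst hD
    have hC0 : C = 0 := by linear_combination hsum
    exact h1 (by rw [← hC, hC0]; simp)
  · -- B=0, C^5=1, D^5=1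
    subst hB
    exact h2 (by linear_combination -hC - hD + (C^4 - C^3*D + C^2*D^2 - C*D^3 + D^4) * hsum)
  · subst hC; subst hD
    have hB0 : B = 0 := by linear_combination hsum
    exact h1 (by rw [← hB, hB0]; simp)
  · subst hC
    exact h2 (by linear_combination -hB - hD + (B^4 - B^3*D + B^2*D^2 - B*D^3 + D^4) * hsum)
  · subst hD
    exact h2 (by linear_combination -hB - hC + (B^4 - B^3*C + B^2*C^2 - B*C^3 + C^4) * hsum)
  · -- all nonzero: B^5 = C^5 = D^5 = 1
    set u : ZMod p := C * B ^ 4 with hu_def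
    have hu : u ^ 5 = 1 := by
      simp only [hu_def]
      linear_combination B^20 * hC +
        (B^15 + B^10 + B^5 + 1) * hB
    have hBC : (B + C) ^ 5 = -1 := by
      have hD' : D = -B - C := by linear_combination hsum
      rw [hD'] at hD
      linear_combination -hD
    have hv : (1 + u) ^ 5 = -1 := by
      simp only [hu_def]
      linear_combination hBC + (-1 + C^5 + 5*B*C^4 + 10*B^2*C^3 + 10*B^3*C^2 + B^5*C^5
        + 5*B^6*C^4 + 10*B^7*C^3 + B^10*C^5 + 5*B^11*C^4 + B^15*C^5) * hB
    exact h33 (by linear_combination (10*u^4 + 45*u^3 + 70*u^2 + 35*u - 11) * hu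
      + (-10*u^4 + 5*u^3 + 5*u^2 - 10*u + 11) * hv)

/-- For a prime `p ≡ 1 (mod 5)` with `p ∉ {11, 41, 61}`, the surface
`x^(2(p-1)/5) + y^(2(p-1)/5) + x^((p-1)/5) y^((p-1)/5) + z^(2(p-1)/5) + w^(2(p-1)/5) = 0`
in `ℙ^3` over `𝔽_p` contains no `𝔽_p`-line (a line being the projectivization of a
2-dimensional linear subspace of `𝔽_p^4`); in particular its intersection with the plane
`x = 0` has no `𝔽_p`-rational point. -/
theorem stmt_16 (p : ℕ) [Fact p.Prime] (hmod : p % 5 = 1)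
    (h11 : p ≠ 11) (h41 : p ≠ 41) (h61 : p ≠ 61) :
    (¬∃ W : Submodule (ZMod p) (Fin 4 → ZMod p), Module.finrank (ZMod p) W = 2 ∧
      ∀ v ∈ W, (v 0) ^ (2 * (p - 1) / 5) + (v 1) ^ (2 * (p - 1) / 5)
        + (v 0) ^ ((p - 1) / 5) * (v 1) ^ ((p - 1) / 5)
        + (v 2) ^ (2 * (p - 1) / 5) + (v 3) ^ (2 * (p - 1) / 5) = 0) ∧
    (∀ v : Fin 4 → ZMod p, v ≠ 0 → v 0 = 0 →
      (v 0) ^ (2 * (p - 1) / 5) + (v 1) ^ (2 * (p - 1) / 5)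
        + (v 0) ^ ((p - 1) / 5) * (v 1) ^ ((p - 1) / 5)
        + (v 2) ^ (2 * (p - 1) / 5) + (v 3) ^ (2 * (p - 1) / 5) ≠ 0) := by
  have hp : p.Prime := Fact.out
  have hp2 := hp.two_le
  have hpge : 11 ≤ p := by
    by_contra h
    have hp6 : p = 6 := by omega
    rw [hp6] at hp
    norm_num at hp
  have hq5 : 5 ∣ p - 1 := by omega
  have hqpos : 0 < (p - 1) / 5 := by omega
  have h2q : 2 * (p - 1) / 5 = 2 * ((p - 1) / 5) := by omega
  have h2qpos : 0 < 2 * (p - 1) / 5 := by omega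
  -- the fifth-power fact
  have fifth : ∀ t : ZMod p, t ^ (2 * (p - 1) / 5) = 0 ∨ (t ^ (2 * (p - 1) / 5)) ^ 5 = 1 := by
    intro t
    rcases eq_or_ne t 0 with ht | ht
    · left; rw [ht]; exact zero_pow (by omega)
    · right
      rw [← pow_mul, h2q]
      have : 2 * ((p - 1) / 5) * 5 = (p - 1) * 2 := by omega
      rw [this, pow_mul, ZMod.pow_card_sub_one_eq_one ht, one_pow]
  -- part two
  have part2 : ∀ v : Fin 4 → ZMod p, v ≠ 0 → v 0 = 0 →
      (v 0) ^ (2 * (p - 1) / 5) + (v 1) ^ (2 * (p - 1) / 5)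
        + (v 0) ^ ((p - 1) / 5) * (v 1) ^ ((p - 1) / 5)
        + (v 2) ^ (2 * (p - 1) / 5) + (v 3) ^ (2 * (p - 1) / 5) ≠ 0 := by
    intro v hv hv0
    rw [hv0, zero_pow (by omega), zero_pow (by omega), zero_mul, zero_add, add_zero]
    have hne : ¬ ((v 1) ^ (2 * (p - 1) / 5) = 0 ∧ (v 2) ^ (2 * (p - 1) / 5) = 0 ∧
        (v 3) ^ (2 * (p - 1) / 5) = 0) := by
      rintro ⟨h1, h2', h3⟩
      apply hv
      funext i
      have e1 : v 1 = 0 := pow_eq_zero_iff (by omega) |>.mp h1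
      have e2 : v 2 = 0 := pow_eq_zero_iff (by omega) |>.mp h2'
      have e3 : v 3 = 0 := pow_eq_zero_iff (by omega) |>.mp h3
      fin_cases i <;> simp_all
    exact key5 p hmod h11 _ _ _ (fifth (v 1)) (fifth (v 2)) (fifth (v 3)) hne
  refine ⟨?_, part2⟩
  rintro ⟨W, hrank, hW⟩
  haveI : FiniteDimensional (ZMod p) W := by
    have : FiniteDimensional (ZMod p) (Fin 4 → ZMod p) := by infer_instance
    exact FiniteDimensional.finiteDimensional_submodule W
  let f : W →ₗ[ZMod p] ZMod p := (LinearMap.proj 0).comp W.subtype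
  have hker : 0 < Module.finrank (ZMod p) (LinearMap.ker f) := by
    have h := LinearMap.finrank_range_add_finrank_ker f
    have hle : Module.finrank (ZMod p) (LinearMap.range f) ≤ 1 := by
      calc Module.finrank (ZMod p) (LinearMap.range f)
          ≤ Module.finrank (ZMod p) (ZMod p) := Submodule.finrank_le _
        _ = 1 := Module.finrank_self _
    omega
  haveI : Nontrivial (LinearMap.ker f) := Module.finrank_pos_iff.mp hker
  obtain ⟨x, hx⟩ := exists_ne (0 : LinearMap.ker f)
  have hx0 : (x : W) ≠ 0 := by
    intro h
    exact hx (Subtype.ext h)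
  have hv0 : ((x : W) : Fin 4 → ZMod p) ≠ 0 := by
    intro h
    exact hx0 (Subtype.ext h)
  have hf : ((x : W) : Fin 4 → ZMod p) 0 = 0 := x.2
  exact part2 _ hv0 hf (hW _ (x : W).2)
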